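/- For every m∈[0,∞)^ℕ, the map ψ ↦ φ(m,ψ) is non-decreasing with respect to the stochastic ordering: if ψ ≤_st ψ′, i.e. ψ([a,∞)) ≤ ψ′([a,∞)) for all a∈ℕ_0, then φ(m,ψ) ≤ φ(m,ψ′). Consequently, for each fixed ρ_mi ≥ 0, the map ρ_ma ↦ χ(ρ_mi, ρ_ma) is non-decreasing. -/

import Mathlib

open MeasureTheory ProbabilityTheory Filter
open scoped ENNReal NNReal Classical

namespace BoxBose

/-- Sites of the lattice `ℤ^d`. -/
abbrev Site (d : ℕ) := Fin d → ℤ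

/-- Configurations: `ω k x` is the number of points at site `x` carrying the mark `x + G k`. -/
abbrev Config (d : ℕ) := ℕ+ → Site d → ℕ

/-- The centred box of radius `n` in `ℤ^d`, as a finite set of sites. -/
noncomputable def box (d n : ℕ) : Finset (Site d) :=
  Fintype.piFinset fun _ : Fin d => Finset.Icc (-(n : ℤ)) (n : ℤ)

/-- Restriction of a configuration to a finite set of sites. -/
def restrict {d : ℕ} (Λ : Finset (Site d)) (ω : Config d) : Config d :=
  fun k x => if x ∈ Λ then ω k x else 0

/-- Shift of a configuration by a lattice vector `z`. -/
def shift {d : ℕ} (z : Site d) (ω : Config d) : Config d := fun k x => ω k (x + z)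

/-- Shift-invariant probability measures on the configuration space (the set `M₁ˢ(Ω)`). -/
def IsShiftInvariantProb {d : ℕ} (P : Measure (Config d)) : Prop :=
  IsProbabilityMeasure P ∧ ∀ z : Site d, P.map (shift z) = P

/-- Relative entropy `H(μ|ν)` of two measures, given by the discrete formula
`H(μ|ν) = ∑ₓ [ν(x) − μ(x) + μ(x) log (μ(x)/ν(x))]` if `μ ≪ ν`, and `∞` otherwise. -/
noncomputable def Hrel {α : Type*} [MeasurableSpace α] (μ ν : Measure α) : ℝ≥0∞ :=
  if μ ≪ ν then
    ∑' x : α, ENNReal.ofReal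
      ((ν {x}).toReal - (μ {x}).toReal
        + (μ {x}).toReal * Real.log ((μ {x}).toReal / (ν {x}).toReal))
  else ⊤

/-- The entropy density `I(P)` of `P` relative to a reference measure `ν`: the limit, along
increasing centred boxes `Q ↑ ℤ^d`, of `|Q|⁻¹ H(P_Q | ν_Q)` (written as a `limsup`, which
coincides with the limit whenever the latter exists; the paper guarantees its existence). -/
noncomputable def entDens {d : ℕ} (ν P : Measure (Config d)) : ℝ≥0∞ :=
  Filter.limsup
    (fun n : ℕ =>
      Hrel (P.map (restrict (box d n))) (ν.map (restrict (box d n)))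
        / ((box d n).card : ℝ≥0∞))
    Filter.atTop

/-- `μ` is the law of a field of independent Poisson random variables, with parameter `r k`
for every coordinate `ξ⁽ᵏ⁾(x)`, `k ∈ ℕ`, `x ∈ ℤ^d`. -/
def IsPoissonField (d : ℕ) (r : ℕ+ → ℝ≥0) (μ : Measure (Config d)) : Prop :=
  IsProbabilityMeasure μ ∧
    iIndepFun
      (fun p : ℕ+ × Site d => fun ω : Config d => ω p.1 p.2) μ ∧
    ∀ (k : ℕ+) (x : Site d), μ.map (fun ω : Config d => ω k x) = poissonMeasure (r k)

/-- The data of the box version of the interacting Bose gas: deterministic box-like marks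
`G k` of cardinality `k`, a nonnegative symmetric compactly supported pair potential `v`,
a summable sequence of positive intensities `q`, and a reference marked Poisson point
process `ref` with intensities `q`. -/
structure Model (d : ℕ) where
  G : ℕ+ → Finset (Site d)
  hG : ∀ k : ℕ+, ∃ L : ℕ,
    (Fintype.piFinset fun _ : Fin d => Finset.Icc (-(L : ℤ)) (L : ℤ)) ⊆ G k ∧
    G k ⊆ (Fintype.piFinset fun _ : Fin d => Finset.Icc (-(L : ℤ) - 1) ((L : ℤ) + 1)) ∧
    (G k).card = (k : ℕ)
  v : Site d → ℝ
  hv_nonneg : ∀ i, 0 ≤ v i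
  hv_symm : ∀ i, v i = v (-i)
  hv_fin : (Function.support v).Finite
  q : ℕ+ → ℝ≥0
  hq_pos : ∀ k, 0 < q k
  hq_sum : Summable q
  ref : Measure (Config d)
  href : IsPoissonField d q ref

variable {d : ℕ}

/-- The pair interaction `T_{x,y}(G,G') = ∑_{i∈G} ∑_{j∈G'} v(x+i−y−j)`. -/
noncomputable def T (M : Model d) (x y : Site d) (A B : Finset (Site d)) : ℝ :=
  ∑ i ∈ A, ∑ j ∈ B, M.v (x + i - y - j)

/-- `v̄ = ∑_{i∈ℤ^d} v(i)`, as an extended nonnegative real. -/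
noncomputable def vbar (M : Model d) : ℝ≥0∞ := ∑' i : Site d, ENNReal.ofReal (M.v i)

/-- `v̄ = ∑_{i∈ℤ^d} v(i)`, as a real number. -/
noncomputable def vbarR (M : Model d) : ℝ := ∑' i : Site d, M.v i

/-- The energy `Φ_{0,ℤ^d}(ω)` between the origin and the whole lattice. -/
noncomputable def PhiZero (M : Model d) (ω : Config d) : ℝ≥0∞ :=
  ∑' (y : Site d) (k : ℕ+) (l : ℕ+),
    (ω k 0 : ℝ≥0∞) * (ω l y : ℝ≥0∞) * ENNReal.ofReal (T M 0 y (M.G k) (M.G l))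

/-- The counting functional `N₀^{(δ_k)}(ω)`, the number of points at the origin with mark `G k`. -/
noncomputable def Ndelta (k : ℕ+) (ω : Config d) : ℝ≥0∞ := (ω k 0 : ℝ≥0∞)

/-- The counting functional `N₀^{(ℓ)}(ω) = ∑_k k·N₀^{(δ_k)}(ω)`. -/
noncomputable def Nell (ω : Config d) : ℝ≥0∞ :=
  ∑' k : ℕ+, ((k : ℕ) : ℝ≥0∞) * (ω k 0 : ℝ≥0∞)

/-- Admissibility of a family `(P_a)_{a∈ℕ₀}` in the variational formula for `φ(m,ψ)`:
each `P_a` is a shift-invariant probability measure, and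
`∑_a ψ(a) P_a(N₀^{(δ_k)}) = m_k` for every `k ∈ ℕ`. -/
def phiAdmissible (M : Model d) (m : ℕ+ → ℝ≥0) (ψ : PMF ℕ) (P : ℕ → Measure (Config d)) : Prop :=
  (∀ a : ℕ, IsShiftInvariantProb (P a)) ∧
    ∀ k : ℕ+, (∑' a : ℕ, ψ a * ∫⁻ ω, Ndelta k ω ∂(P a)) = (m k : ℝ≥0∞)

/-- The functional minimised in the definition of `φ(m,ψ)`:
`∑_a ψ(a) [I(P_a) + P_a(Φ_{0,ℤ^d}) + 2v̄·a·P_a(N₀^{(ℓ)}) + v̄·a²]`. -/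
noncomputable def phiObjective (M : Model d) (ψ : PMF ℕ) (P : ℕ → Measure (Config d)) : ℝ≥0∞ :=
  ∑' a : ℕ, ψ a *
    (entDens M.ref (P a) + (∫⁻ ω, PhiZero M ω ∂(P a))
      + 2 * vbar M * (a : ℝ≥0∞) * (∫⁻ ω, Nell ω ∂(P a)) + vbar M * (a : ℝ≥0∞) ^ 2)

/-- The variational formula `φ(m,ψ)`. -/
noncomputable def phi (M : Model d) (m : ℕ+ → ℝ≥0) (ψ : PMF ℕ) : ℝ≥0∞ :=
  sInf { r | ∃ P : ℕ → Measure (Config d), phiAdmissible M m ψ P ∧ r = phiObjective M ψ P }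

/-- The free-energy functional
`χ(ρ_mi,ρ_ma) = inf {φ(m,ψ) : ∑_k k·m_k = ρ_mi, ∑_a a·ψ(a) = ρ_ma}`. -/
noncomputable def chi (M : Model d) (ρmi ρma : ℝ≥0∞) : ℝ≥0∞ :=
  sInf { r | ∃ (m : ℕ+ → ℝ≥0) (ψ : PMF ℕ),
    (∑' k : ℕ+, ((k : ℕ) : ℝ≥0∞) * (m k : ℝ≥0∞)) = ρmi ∧
    (∑' a : ℕ, (a : ℝ≥0∞) * ψ a) = ρma ∧ r = phi M m ψ }

/-- `χ(ρ) = χ(ρ,0)` as a real-valued function of a real density. -/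
noncomputable def chiR (M : Model d) (ρ : ℝ) : ℝ := (chi M (ENNReal.ofReal ρ) 0).toReal

/-- The total particle density `∑_k k·m_k + ∑_a a·ψ(a)` of a pair `(m,ψ)`. -/
noncomputable def massOf {d : ℕ} (m : ℕ+ → ℝ≥0) (ψ : PMF ℕ) : ℝ≥0∞ :=
  (∑' k : ℕ+, ((k : ℕ) : ℝ≥0∞) * (m k : ℝ≥0∞)) + ∑' a : ℕ, (a : ℝ≥0∞) * ψ a

/-- `(m,ψ)` is a minimiser of the constrained variational problem
`χ(ρ) = min {φ(m,ψ) : ∑_k k·m_k + ∑_a a·ψ(a) = ρ}` at density `ρ`. -/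
def IsMinimiserAt (M : Model d) (m : ℕ+ → ℝ≥0) (ψ : PMF ℕ) (ρ : ℝ) : Prop :=
  massOf (d := d) m ψ = ENNReal.ofReal ρ ∧
    ∀ (m' : ℕ+ → ℝ≥0) (ψ' : PMF ℕ),
      massOf (d := d) m' ψ' = ENNReal.ofReal ρ → phi M m ψ ≤ phi M m' ψ'

/-- The critical particle density
`ρ_c = sup {ρ ∈ (0,∞) : the constrained problem at density ρ has a minimiser (m, δ₀)}`. -/
noncomputable def rhoC (M : Model d) : ℝ≥0∞ :=
  sSup { x : ℝ≥0∞ | ∃ ρ : ℝ, 0 < ρ ∧ x = ENNReal.ofReal ρ ∧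
    ∃ m : ℕ+ → ℝ≥0, IsMinimiserAt M m (PMF.pure 0) ρ }

/-- The assumption `q_k = e^{o(k)}` as `k → ∞`. -/
def qSubexp (M : Model d) : Prop :=
  Filter.Tendsto (fun k : ℕ+ => Real.log (M.q k) / ((k : ℕ) : ℝ)) Filter.atTop (nhds 0)

/-- `e^{-x}` for `x ∈ [0,∞]`, with `e^{-∞} = 0`. -/
noncomputable def expNeg (x : ℝ≥0∞) : ℝ≥0∞ :=
  if x = ⊤ then 0 else ENNReal.ofReal (Real.exp (-x.toReal))

/-- The self-interaction `t_k = T_{0,0}(G_k,G_k)` of a `k`-mark. -/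
noncomputable def tMark (M : Model d) (k : ℕ+) : ℝ := T M 0 0 (M.G k) (M.G k)

/-- The interaction `Φ^{(k)}(ω)` between the configuration `ω` and a `k`-mark at the origin. -/
noncomputable def PhiMark (M : Model d) (k : ℕ+) (ω : Config d) : ℝ≥0∞ :=
  ∑' (x : Site d) (l : ℕ+), (ω l x : ℝ≥0∞) * ENNReal.ofReal (T M 0 x (M.G k) (M.G l))

/-- `(P_a)_{a∈ℕ₀}` attains the infimum in the variational formula for `φ(m,ψ)`. -/
def IsMinFamily (M : Model d) (m : ℕ+ → ℝ≥0) (ψ : PMF ℕ) (P : ℕ → Measure (Config d)) : Prop :=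
  phiAdmissible M m ψ P ∧ phiObjective M ψ P = phi M m ψ

/-- The relative entropy `H(m|q) = ∑_k (q_k − m_k + m_k log(m_k/q_k))` of sequences. -/
noncomputable def Hseq (M : Model d) (m : ℕ+ → ℝ≥0) : ℝ≥0∞ :=
  ∑' k : ℕ+, ENNReal.ofReal
    ((M.q k : ℝ) - (m k : ℝ) + (m k : ℝ) * Real.log ((m k : ℝ) / (M.q k : ℝ)))

/-- The non-interacting free energy `χ^{(v=0)}(ρ,0) = inf {H(m|q) : ∑_k k·m_k = ρ}`. -/
noncomputable def chiV0 (M : Model d) (ρ : ℝ) : ℝ≥0∞ :=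
  sInf { r | ∃ m : ℕ+ → ℝ≥0,
    (∑' k : ℕ+, ((k : ℕ) : ℝ≥0∞) * (m k : ℝ≥0∞)) = ENNReal.ofReal ρ ∧ r = Hseq M m }

/-- The number of particles attached to points in `Λ`: `N_Λ^{(ℓ)}(ω)`. -/
noncomputable def NellIn (Λ : Finset (Site d)) (ω : Config d) : ℝ≥0∞ :=
  ∑ x ∈ Λ, ∑' k : ℕ+, ((k : ℕ) : ℝ≥0∞) * (ω k x : ℝ≥0∞)

/-- The internal energy `Φ_{Λ,Λ}(ω)` of the configuration in `Λ`. -/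
noncomputable def PhiIn (M : Model d) (Λ : Finset (Site d)) (ω : Config d) : ℝ≥0∞ :=
  ∑ x ∈ Λ, ∑ y ∈ Λ, ∑' (k : ℕ+) (l : ℕ+),
    (ω k x : ℝ≥0∞) * (ω l y : ℝ≥0∞) * ENNReal.ofReal (T M x y (M.G k) (M.G l))

/-- `M_{Λ,Λᶜ}(ω)`: the number of particles outside `Λ` attached to points in `Λ`. -/
noncomputable def MOut (M : Model d) (Λ : Finset (Site d)) (ω : Config d) : ℝ≥0∞ :=
  ∑ x ∈ Λ, ∑' k : ℕ+,
    (ω k x : ℝ≥0∞) * (((M.G k).filter fun i => x + i ∉ Λ).card : ℝ≥0∞)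

/-- The partition function with zero Dirichlet boundary conditions:
`Z^{Dir}_{N,Λ} = E^{Dir}_Λ [e^{−Φ_{Λ,Λ}} 1{N_Λ^{(ℓ)} = N}]`, where `E^{Dir}_Λ` is the
expectation with respect to the reference process conditioned on `{M_{Λ,Λᶜ} = 0}`. -/
noncomputable def ZDir (M : Model d) (N : ℕ) (Λ : Finset (Site d)) : ℝ≥0∞ :=
  ∫⁻ ω in { ω : Config d | NellIn Λ ω = (N : ℝ≥0∞) },
    expNeg (PhiIn M Λ ω) ∂(ProbabilityTheory.cond M.ref { ω : Config d | MOut M Λ ω = 0 })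

/-!
Given an admissible family `(P' b)` for `ψ'`, couple `ψ` and `ψ'` monotonically (`π a b = 0` for
`b < a`) and give the atom `a` of `ψ` the mixture of the `P' b` under the conditional law of `b`
given `a`. The constraint is linear in the family, so it is preserved; the terms
`2 v̄ a Pₐ(N₀^{(ℓ)}) + v̄ a²` can only decrease since `a ≤ b` on the support of `π`; and the
entropy term does not increase because the entropy density is convex under countable mixtures of
shift-invariant measures. That convexity holds box by box for the relative entropy and survives
the `limsup` because, for a shift-invariant measure, every normalised box entropy already lies
below the `limsup`: the reference field is independent over disjoint windows, which makes box
entropies superadditive, and a large box contains disjoint translates of a small one.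
For `χ`, moving part of the mass of `ψ'` to `0` lowers its mean to any prescribed value while
staying stochastically below `ψ'`.
-/

section EntropyTerm

variable {ι ι₁ ι₂ : Type*}

noncomputable def hrelTerm (a b : ℝ) : ℝ := a - b + b * Real.log (b / a)

lemma hrelTerm_zero_right (a : ℝ) : hrelTerm a 0 = a := by simp [hrelTerm]

lemma hrelTerm_eq_mul_klFun {a : ℝ} (ha : 0 < a) (b : ℝ) :
    hrelTerm a b = a * InformationTheory.klFun (b / a) := by
  rw [hrelTerm, InformationTheory.klFun]
  field_simp
  ring

lemma hrelTerm_nonneg {a b : ℝ} (ha : 0 < a) (hb : 0 ≤ b) : 0 ≤ hrelTerm a b := by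
  rw [hrelTerm_eq_mul_klFun ha]
  exact mul_nonneg ha.le (InformationTheory.klFun_nonneg (div_nonneg hb ha.le))

lemma hrelTerm_mul {l a : ℝ} (hl : 0 < l) (ha : 0 < a) (b : ℝ) :
    hrelTerm (l * a) (l * b) = l * hrelTerm a b := by
  rw [hrelTerm_eq_mul_klFun (mul_pos hl ha), hrelTerm_eq_mul_klFun ha,
    mul_div_mul_left _ _ hl.ne', mul_assoc]

/-- The tangent line of `t ↦ hrelTerm c t` at `T` lies below it, with gap `hrelTerm T t`. -/
lemma hrelTerm_eq_tangent_add {c T t : ℝ} (hc : 0 < c) (hT : 0 < T) (ht : 0 ≤ t) :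
    hrelTerm c t = c - T + t * Real.log (T / c) + hrelTerm T t := by
  rcases ht.eq_or_lt with rfl | ht
  · simp [hrelTerm_zero_right]
  · simp only [hrelTerm]
    rw [Real.log_div ht.ne' hc.ne', Real.log_div hT.ne' hc.ne', Real.log_div ht.ne' hT.ne']
    ring

lemma tsum_ofReal_eq_top_of_not_summable {f : ι → ℝ} (hf : ∀ i, 0 ≤ f i)
    (hs : ¬ Summable f) : ∑' i, ENNReal.ofReal (f i) = ⊤ := by
  by_contra hne
  exact hs ((ENNReal.summable_toReal hne).congr fun i => ENNReal.toReal_ofReal (hf i))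

lemma ofReal_le_tsum_ofReal {f : ι → ℝ} (hf : ∀ i, 0 ≤ f i) {r : ℝ}
    (h : Summable f → r ≤ ∑' i, f i) : ENNReal.ofReal r ≤ ∑' i, ENNReal.ofReal (f i) := by
  by_cases hs : Summable f
  · rw [← ENNReal.ofReal_tsum_of_nonneg hf hs]
    exact ENNReal.ofReal_le_ofReal (h hs)
  · simp [tsum_ofReal_eq_top_of_not_summable hf hs]

lemma ofReal_add_tsum_ofReal_le {f g h : ι → ℝ} {r : ℝ} (hr : 0 ≤ r) (hf : ∀ i, 0 ≤ f i)
    (hg : ∀ i, 0 ≤ g i) (hfgh : ∀ i, f i = g i + h i) (hh : HasSum h r) :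
    ENNReal.ofReal r + ∑' i, ENNReal.ofReal (g i) ≤ ∑' i, ENNReal.ofReal (f i) := by
  by_cases hs : Summable f
  · have hgs : Summable g := (hs.sub hh.summable).congr fun i => by rw [hfgh]; ring
    rw [← ENNReal.ofReal_tsum_of_nonneg hg hgs, ← ENNReal.ofReal_add hr (tsum_nonneg hg),
      ← ENNReal.ofReal_tsum_of_nonneg hf hs, tsum_congr hfgh, hgs.tsum_add hh.summable,
      hh.tsum_eq, add_comm]
  · simp [tsum_ofReal_eq_top_of_not_summable hf hs]

lemma ofReal_hrelTerm_tsum_le {c : ℝ} (hc : 0 < c) {w t : ι → ℝ} (hw : ∀ i, 0 ≤ w i)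
    (ht : ∀ i, 0 ≤ t i) (hw1 : HasSum w 1) (hwt : Summable fun i => w i * t i) :
    ENNReal.ofReal (hrelTerm c (∑' i, w i * t i))
      ≤ ∑' i, ENNReal.ofReal (w i * hrelTerm c (t i)) := by
  set T := ∑' i, w i * t i
  have hwt0 : ∀ i, 0 ≤ w i * t i := fun i => mul_nonneg (hw i) (ht i)
  refine ofReal_le_tsum_ofReal (fun i => mul_nonneg (hw i) (hrelTerm_nonneg hc (ht i)))
    fun hs => ?_
  obtain hT0 | hTpos : 0 = T ∨ 0 < T := (tsum_nonneg hwt0).eq_or_lt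
  · have h0 : HasSum (fun i => w i * t i) 0 := by
      rw [hT0]
      exact hwt.hasSum
    have hzero : ∀ i, w i * hrelTerm c (t i) = w i * c := by
      intro i
      rcases mul_eq_zero.1 (congrFun ((hasSum_zero_iff_of_nonneg hwt0).1 h0) i) with h | h
      · simp [h]
      · simp [h, hrelTerm_zero_right]
    rw [← hT0, hrelTerm_zero_right, tsum_congr hzero, tsum_mul_right, hw1.tsum_eq, one_mul]
  · have htangent : ∀ i, w i * (c - T) + w i * t i * Real.log (T / c) ≤ w i * hrelTerm c (t i) := by
      intro i
      rw [hrelTerm_eq_tangent_add hc hTpos (ht i)]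
      nlinarith [mul_nonneg (hw i) (hrelTerm_nonneg hTpos (ht i))]
    have hsum : HasSum (fun i => w i * (c - T) + w i * t i * Real.log (T / c)) (hrelTerm c T) := by
      have hT : hrelTerm c T = 1 * (c - T) + T * Real.log (T / c) := by
        simp only [hrelTerm]
        ring
      rw [hT]
      exact (hw1.mul_right (c - T)).add (hwt.hasSum.mul_right (Real.log (T / c)))
    exact hsum.tsum_eq ▸ hsum.summable.tsum_le_tsum htangent hs

lemma ofReal_hrelTerm_add_tsum_le {q₁ m : ℝ} (hq₁ : 0 < q₁) (hm : 0 ≤ m) {q₂ p : ι → ℝ}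
    (hq₂ : ∀ i, 0 < q₂ i) (hq₂1 : HasSum q₂ 1) (hp : ∀ i, 0 ≤ p i) (hpm : HasSum p m) :
    ENNReal.ofReal (hrelTerm q₁ m) + ∑' i, ENNReal.ofReal (m * hrelTerm (q₂ i) (p i / m))
      ≤ ∑' i, ENNReal.ofReal (hrelTerm (q₁ * q₂ i) (p i)) := by
  refine ofReal_add_tsum_ofReal_le (hrelTerm_nonneg hq₁ hm)
    (fun i => hrelTerm_nonneg (mul_pos hq₁ (hq₂ i)) (hp i))
    (fun i => mul_nonneg hm (hrelTerm_nonneg (hq₂ i) (div_nonneg (hp i) hm)))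
    (h := fun i => (q₁ - m) * q₂ i + p i * Real.log (m / q₁)) (fun i => ?_) ?_
  · rcases hm.eq_or_lt with rfl | hm
    · have hp0 : p i = 0 := congrFun ((hasSum_zero_iff_of_nonneg hp).1 hpm) i
      simp [hp0, hrelTerm_zero_right]
    · rw [← hrelTerm_mul hm (hq₂ i), mul_div_cancel₀ _ hm.ne',
        hrelTerm_eq_tangent_add (mul_pos hq₁ (hq₂ i)) (mul_pos hm (hq₂ i)) (hp i),
        mul_div_mul_right _ _ (hq₂ i).ne']
      ring
  · have hr : hrelTerm q₁ m = (q₁ - m) * 1 + m * Real.log (m / q₁) := by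
      simp only [hrelTerm]
      ring
    rw [hr]
    exact (hq₂1.mul_left _).add (hpm.mul_right _)

/-- Discrete superadditivity of relative entropy with respect to a product reference: split
along the first coordinate by the chain rule, then apply Jensen to the second marginal. -/
lemma tsum_ofReal_hrelTerm_marginals_le {q₁ : ι₁ → ℝ} {q₂ : ι₂ → ℝ} {p : ι₁ × ι₂ → ℝ}
    (hq₁ : ∀ a, 0 < q₁ a) (hq₂ : ∀ b, 0 < q₂ b) (hq₂1 : HasSum q₂ 1)
    (hp : ∀ s, 0 ≤ p s) (hp1 : HasSum p 1) :
    ∑' a, ENNReal.ofReal (hrelTerm (q₁ a) (∑' b, p (a, b)))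
      + ∑' b, ENNReal.ofReal (hrelTerm (q₂ b) (∑' a, p (a, b)))
      ≤ ∑' s, ENNReal.ofReal (hrelTerm (q₁ s.1 * q₂ s.2) (p s)) := by
  set m : ι₁ → ℝ := fun a => ∑' b, p (a, b)
  have hrow : ∀ a, Summable fun b => p (a, b) := hp1.summable.prod_factor
  have hm : ∀ a, 0 ≤ m a := fun a => tsum_nonneg fun b => hp (a, b)
  have hm1 : HasSum m 1 := by
    rw [← hp1.tsum_eq, hp1.summable.tsum_prod]
    exact hp1.summable.prod.hasSum
  have hpm : ∀ a b, m a * (p (a, b) / m a) = p (a, b) := fun a b => by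
    rcases (hm a).eq_or_lt with h | h
    · have h0 : HasSum (fun b => p (a, b)) 0 := by
        rw [h]
        exact (hrow a).hasSum
      rw [← h, zero_mul]
      exact (congrFun ((hasSum_zero_iff_of_nonneg fun b => hp (a, b)).1 h0) b).symm
    · field_simp
  have hcolumn : ∀ b, ENNReal.ofReal (hrelTerm (q₂ b) (∑' a, p (a, b)))
      ≤ ∑' a, ENNReal.ofReal (m a * hrelTerm (q₂ b) (p (a, b) / m a)) := fun b => by
    simpa only [hpm] using ofReal_hrelTerm_tsum_le (hq₂ b) hm
      (fun a => div_nonneg (hp (a, b)) (hm a)) hm1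
      ((hp1.summable.prod_symm.prod_factor b).congr fun a => (hpm a b).symm)
  calc _ ≤ ∑' a, ENNReal.ofReal (hrelTerm (q₁ a) (m a))
        + ∑' b, ∑' a, ENNReal.ofReal (m a * hrelTerm (q₂ b) (p (a, b) / m a)) := by
        gcongr with b
        exact hcolumn b
    _ = ∑' a, (ENNReal.ofReal (hrelTerm (q₁ a) (m a))
        + ∑' b, ENNReal.ofReal (m a * hrelTerm (q₂ b) (p (a, b) / m a))) := by
        rw [ENNReal.tsum_comm, ENNReal.tsum_add]
    _ ≤ _ := by
        rw [ENNReal.tsum_prod']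
        exact ENNReal.tsum_le_tsum fun a =>
          ofReal_hrelTerm_add_tsum_le (hq₁ a) (hm a) hq₂ hq₂1 (fun b => hp (a, b)) (hrow a).hasSum

end EntropyTerm

section RelativeEntropy

variable {α β γ ι : Type*} [MeasurableSpace α] [MeasurableSpace β] [MeasurableSpace γ]

lemma hasSum_toReal_of_tsum_eq {f : ι → ℝ≥0∞} {a : ℝ≥0∞} (h : ∑' i, f i = a) (ha : a ≠ ⊤) :
    HasSum (fun i => (f i).toReal) a.toReal := by
  have hf : ∀ i, f i ≠ ⊤ := ENNReal.ne_top_of_tsum_ne_top (h ▸ ha)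
  rw [← h, ENNReal.tsum_toReal_eq hf]
  exact ENNReal.hasSum_toReal (h ▸ ha)

lemma Hrel_of_ac {μ ν : Measure α} (h : μ ≪ ν) :
    Hrel μ ν = ∑' x, ENNReal.ofReal (hrelTerm (ν {x}).toReal (μ {x}).toReal) := if_pos h

lemma Hrel_of_not_ac {μ ν : Measure α} (h : ¬ μ ≪ ν) : Hrel μ ν = ⊤ := if_neg h

lemma Hrel_eq_tsum_subtype {μ ν : Measure α} (h : μ ≪ ν) {S : Set α}
    (hS : ∀ x ∉ S, ν {x} = 0) :
    Hrel μ ν = ∑' x : S, ENNReal.ofReal (hrelTerm (ν {(x : α)}).toReal (μ {(x : α)}).toReal) := by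
  rw [Hrel_of_ac h]
  refine (tsum_subtype_eq_of_support_subset fun x hx => ?_).symm
  by_contra hxS
  have hν := hS x hxS
  exact hx (by simp [hν, h hν, hrelTerm_zero_right])

lemma ofReal_hrelTerm_toReal_tsum_le {c : ℝ≥0∞} (hc0 : c ≠ 0) (hc : c ≠ ⊤) {W t : ι → ℝ≥0∞}
    (hW : ∑' i, W i = 1) (ht : ∀ i, t i ≤ 1) :
    ENNReal.ofReal (hrelTerm c.toReal (∑' i, W i * t i).toReal)
      ≤ ∑' i, W i * ENNReal.ofReal (hrelTerm c.toReal (t i).toReal) := by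
  have hWtop : ∀ i, W i ≠ ⊤ := ENNReal.ne_top_of_tsum_ne_top (hW ▸ ENNReal.one_ne_top)
  have hle : ∑' i, W i * t i ≤ 1 :=
    (ENNReal.tsum_le_tsum fun i => mul_le_of_le_one_right' (ht i)).trans_eq hW
  have hWt := hasSum_toReal_of_tsum_eq (f := fun i => W i * t i) rfl
    (ne_top_of_le_ne_top ENNReal.one_ne_top hle)
  simp only [ENNReal.toReal_mul] at hWt
  have := ofReal_hrelTerm_tsum_le (ENNReal.toReal_pos hc0 hc) (fun i => ENNReal.toReal_nonneg)
    (fun i => ENNReal.toReal_nonneg) (by simpa using hasSum_toReal_of_tsum_eq hW ENNReal.one_ne_top)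
    hWt.summable
  rw [hWt.tsum_eq] at this
  refine this.trans_eq (tsum_congr fun i => ?_)
  rw [ENNReal.ofReal_mul ENNReal.toReal_nonneg, ENNReal.ofReal_toReal (hWtop i)]

lemma Hrel_sum_le [MeasurableSingletonClass α] {ν : Measure α} [IsFiniteMeasure ν]
    {W : ι → ℝ≥0∞} (hW : ∑' i, W i = 1) {ρ : ι → Measure α} [∀ i, IsProbabilityMeasure (ρ i)] :
    Hrel (Measure.sum fun i => W i • ρ i) ν ≤ ∑' i, W i * Hrel (ρ i) ν := by
  by_cases hac : ∀ i, W i ≠ 0 → ρ i ≪ ν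
  swap
  · push Not at hac
    obtain ⟨i, hWi, hi⟩ := hac
    refine le_top.trans (le_of_eq_of_le ?_ (ENNReal.le_tsum i))
    rw [Hrel_of_not_ac hi, ENNReal.mul_top hWi]
  have hmix : Measure.sum (fun i => W i • ρ i) ≪ ν := by
    refine Measure.AbsolutelyContinuous.mk fun s hs hν => ?_
    rw [Measure.sum_apply _ hs, ENNReal.tsum_eq_zero]
    intro i
    rcases eq_or_ne (W i) 0 with h | h
    · simp [h]
    · simp [hac i h hν]
  rw [Hrel_of_ac hmix]
  calc _ ≤ ∑' x, ∑' i, W i * ENNReal.ofReal (hrelTerm (ν {x}).toReal (ρ i {x}).toReal) := by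
        refine ENNReal.tsum_le_tsum fun x => ?_
        rcases eq_or_ne (ν {x}) 0 with hν | hν
        · simp [hν, hmix hν, hrelTerm_zero_right]
        rw [Measure.sum_apply _ (measurableSet_singleton x)]
        exact ofReal_hrelTerm_toReal_tsum_le hν (measure_ne_top ν {x}) hW fun i => prob_le_one
    _ = ∑' i, W i * ∑' x, ENNReal.ofReal (hrelTerm (ν {x}).toReal (ρ i {x}).toReal) := by
        rw [ENNReal.tsum_comm]
        simp_rw [ENNReal.tsum_mul_left]
    _ ≤ _ := by
        refine ENNReal.tsum_le_tsum fun i => ?_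
        rcases eq_or_ne (W i) 0 with h | h
        · simp [h]
        · rw [Hrel_of_ac (hac i h)]

lemma ofReal_hrelTerm_map_singleton_eq_zero [MeasurableSingletonClass β] (μ ν : Measure α)
    {k : α → β} (hk : Measurable k) {y : β} (hy : y ∉ Set.range k) :
    ENNReal.ofReal (hrelTerm ((ν.map k) {y}).toReal ((μ.map k) {y}).toReal) = 0 := by
  have hempty : k ⁻¹' {y} = ∅ :=
    Set.eq_empty_of_forall_notMem fun σ hσ => hy ⟨σ, hσ⟩
  simp [Measure.map_apply hk (measurableSet_singleton y), hempty, hrelTerm_zero_right]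

lemma map_singleton_eq_of_factor [MeasurableSingletonClass β] [MeasurableSingletonClass γ]
    (ξ : Measure α) {f : α → β} {g : α → γ} {u : β → γ} {v : γ → β} (hf : Measurable f)
    (hg : Measurable g) (hgf : g = u ∘ f) (hfg : f = v ∘ g) (σ : α) :
    ξ.map g {g σ} = ξ.map f {f σ} := by
  have hfiber : g ⁻¹' {g σ} = f ⁻¹' {f σ} := by
    ext τ
    simp only [Set.mem_preimage, Set.mem_singleton_iff]
    constructor <;> intro h
    · rw [hfg, Function.comp_apply, Function.comp_apply, h]
    · rw [hgf, Function.comp_apply, Function.comp_apply, h]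
  rw [Measure.map_apply hg (measurableSet_singleton _),
    Measure.map_apply hf (measurableSet_singleton _), hfiber]

/-- `f` and `g` have the same fibres, and relative entropy of image measures only sees the
fibres. -/
lemma Hrel_map_eq_of_factor [MeasurableSingletonClass β] [MeasurableSingletonClass γ]
    {μ ν : Measure α} {f : α → β} {g : α → γ} {u : β → γ} {v : γ → β}
    (hf : Measurable f) (hg : Measurable g) (hu : Measurable u) (hv : Measurable v)
    (hgf : g = u ∘ f) (hfg : f = v ∘ g) :
    Hrel (μ.map g) (ν.map g) = Hrel (μ.map f) (ν.map f) := by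
  have hmap : ∀ (ξ : Measure α) σ, ξ.map g {g σ} = ξ.map f {f σ} := fun ξ σ =>
    map_singleton_eq_of_factor ξ hf hg hgf hfg σ
  have hac : μ.map g ≪ ν.map g ↔ μ.map f ≪ ν.map f := by
    constructor <;> intro h
    · simpa only [Measure.map_map hv hg, ← hfg] using h.map hv
    · simpa only [Measure.map_map hu hf, ← hgf] using h.map hu
  by_cases h : μ.map f ≪ ν.map f
  swap
  · rw [Hrel_of_not_ac h, Hrel_of_not_ac (hac.not.2 h)]
  rw [Hrel_of_ac h, Hrel_of_ac (hac.2 h)]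
  have hrange : ∀ x, ENNReal.ofReal (hrelTerm ((ν.map f) {x}).toReal ((μ.map f) {x}).toReal) ≠ 0 →
      ∃ σ, f σ = x := fun x hx => by
    by_contra hx'
    exact hx (ofReal_hrelTerm_map_singleton_eq_zero μ ν hf hx')
  refine tsum_eq_tsum_of_ne_zero_bij (fun x => u x) (fun x₁ x₂ h => ?_) (fun y hy => ?_)
    (fun x => ?_)
  · obtain ⟨σ₁, hσ₁⟩ := hrange x₁ x₁.2
    obtain ⟨σ₂, hσ₂⟩ := hrange x₂ x₂.2
    have hvu : ∀ σ, v (u (f σ)) = f σ := fun σ => by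
      rw [← Function.comp_apply (f := u), ← hgf, ← Function.comp_apply (f := v), ← hfg]
    apply Subtype.ext
    simp only at h
    rw [← hσ₁, ← hσ₂, ← hvu σ₁, ← hvu σ₂, hσ₁, hσ₂, h]
  · obtain ⟨σ, rfl⟩ : ∃ σ, g σ = y := by
      by_contra hy'
      exact hy (ofReal_hrelTerm_map_singleton_eq_zero μ ν hg hy')
    refine ⟨⟨f σ, ?_⟩, ?_⟩
    · simpa only [Function.mem_support, hmap] using hy
    · simp only [hgf, Function.comp_apply]
  · obtain ⟨σ, hσ⟩ := hrange x x.2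
    simp only [← hσ]
    rw [← Function.comp_apply (f := u), ← hgf, hmap, hmap]

lemma Hrel_map_equiv [MeasurableSingletonClass α] [MeasurableSingletonClass β]
    (μ ν : Measure α) (e : α ≃ᵐ β) : Hrel (μ.map e) (ν.map e) = Hrel μ ν := by
  simpa using Hrel_map_eq_of_factor (μ := μ) (ν := ν) measurable_id e.measurable e.measurable
    e.symm.measurable rfl (by ext; simp)

lemma tsum_measure_singleton_eq_one [MeasurableSingletonClass α] {μ : Measure α}
    [IsProbabilityMeasure μ] {S : Set α} (hS : S.Countable) (hμS : μ Sᶜ = 0) :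
    ∑' x : S, μ {(x : α)} = 1 := by
  simpa [(prob_compl_eq_zero_iff hS.measurableSet).1 hμS] using
    tsum_measure_preimage_singleton (μ := μ) hS (f := id) fun y _ => measurableSet_singleton y

lemma measure_compl_atoms_eq_zero [MeasurableSingletonClass α] {μ : Measure α} {C : Set α}
    (hC : C.Countable) (hμC : μ Cᶜ = 0) : μ {x | μ {x} ≠ 0}ᶜ = 0 := by
  have hsub : {x | μ {x} ≠ 0}ᶜ ⊆ Cᶜ ∪ {x ∈ C | μ {x} = 0} := fun x hx => by
    by_cases hxC : x ∈ C
    · exact Or.inr ⟨hxC, by simpa using hx⟩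
    · exact Or.inl hxC
  refine measure_mono_null hsub (measure_union_null hμC ?_)
  rw [← Set.biUnion_of_singleton {x ∈ C | μ {x} = 0}]
  exact (measure_biUnion_null_iff (hC.mono (Set.sep_subset _ _))).2 fun x hx => hx.2

lemma countable_atoms [MeasurableSingletonClass α] {μ : Measure α} {C : Set α}
    (hC : C.Countable) (hμC : μ Cᶜ = 0) : {x | μ {x} ≠ 0}.Countable :=
  hC.mono fun x hx => by
    by_contra hxC
    exact hx (measure_mono_null (Set.singleton_subset_iff.2 hxC) hμC)

lemma map_fst_singleton_eq_tsum [MeasurableSingletonClass β] [MeasurableSingletonClass γ]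
    {A : Measure (β × γ)} {T : Set γ} (hT : T.Countable) (hA : A (Prod.snd ⁻¹' T)ᶜ = 0) (a : β) :
    A.map Prod.fst {a} = ∑' b : T, A {(a, (b : γ))} := by
  have hunion : Prod.fst ⁻¹' {a} ∩ Prod.snd ⁻¹' T = ⋃ b : T, {(a, (b : γ))} := by
    ext ⟨x, y⟩
    simp [eq_comm]
  have := hT.to_subtype
  rw [Measure.map_apply measurable_fst (measurableSet_singleton a), ← measure_inter_conull hA,
    hunion, measure_iUnion (fun b b' hbb' => Set.disjoint_singleton.2 fun h =>
      hbb' (Subtype.ext (Prod.ext_iff.1 h).2)) fun _ => measurableSet_singleton _]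

lemma map_snd_singleton_eq_tsum [MeasurableSingletonClass β] [MeasurableSingletonClass γ]
    {A : Measure (β × γ)} {T : Set β} (hT : T.Countable) (hA : A (Prod.fst ⁻¹' T)ᶜ = 0) (b : γ) :
    A.map Prod.snd {b} = ∑' a : T, A {((a : β), b)} := by
  have h := map_fst_singleton_eq_tsum (A := A.map Prod.swap) hT
    (by rwa [Measure.map_apply measurable_swap (hT.measurableSet.preimage measurable_snd).compl]) b
  rw [Measure.map_map measurable_fst measurable_swap] at h
  change A.map Prod.snd {b} = _ at h
  rw [h]
  congr 1 with a
  rw [Measure.map_apply measurable_swap (measurableSet_singleton _), ← Set.singleton_prod_singleton,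
    Set.preimage_swap_prod, Set.singleton_prod_singleton]

lemma Hrel_prod_eq_tsum [MeasurableSingletonClass β] [MeasurableSingletonClass γ]
    {A : Measure (β × γ)} {B₁ : Measure β} {B₂ : Measure γ} [SFinite B₂] (hac : A ≪ B₁.prod B₂) :
    Hrel A (B₁.prod B₂) = ∑' s : {a | B₁ {a} ≠ 0} × {b | B₂ {b} ≠ 0}, ENNReal.ofReal
      (hrelTerm ((B₁ {(s.1 : β)}).toReal * (B₂ {(s.2 : γ)}).toReal)
        (A {((s.1 : β), (s.2 : γ))}).toReal) := by
  have hB : ∀ a b, B₁.prod B₂ {(a, b)} = B₁ {a} * B₂ {b} := fun a b => by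
    rw [← Set.singleton_prod_singleton, Measure.prod_prod]
  rw [Hrel_eq_tsum_subtype hac (S := {a | B₁ {a} ≠ 0} ×ˢ {b | B₂ {b} ≠ 0}) fun s hs => ?_,
    ← (Equiv.Set.prod _ _).symm.tsum_eq]
  · simp only [← ENNReal.toReal_mul, ← hB]
    rfl
  · obtain ⟨a, b⟩ := s
    rw [hB]
    rcases not_and_or.1 hs with h | h <;> simp_all

lemma Hrel_map_fst_add_Hrel_map_snd_le [MeasurableSingletonClass β] [MeasurableSingletonClass γ]
    {A : Measure (β × γ)} [IsProbabilityMeasure A] {B₁ : Measure β} {B₂ : Measure γ}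
    [IsProbabilityMeasure B₁] [IsProbabilityMeasure B₂] {C₁ : Set β} {C₂ : Set γ}
    (hC₁ : C₁.Countable) (hC₂ : C₂.Countable) (hB₁ : B₁ C₁ᶜ = 0) (hB₂ : B₂ C₂ᶜ = 0) :
    Hrel (A.map Prod.fst) B₁ + Hrel (A.map Prod.snd) B₂ ≤ Hrel A (B₁.prod B₂) := by
  by_cases hac : A ≪ B₁.prod B₂
  swap
  · rw [Hrel_of_not_ac hac]
    exact le_top
  set T₁ := {a | B₁ {a} ≠ 0}
  set T₂ := {b | B₂ {b} ≠ 0}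
  have hT₁ : T₁.Countable := countable_atoms hC₁ hB₁
  have hT₂ : T₂.Countable := countable_atoms hC₂ hB₂
  have hB₁T₁ : B₁ T₁ᶜ = 0 := measure_compl_atoms_eq_zero hC₁ hB₁
  have hB₂T₂ : B₂ T₂ᶜ = 0 := measure_compl_atoms_eq_zero hC₂ hB₂
  have hAT : A (T₁ ×ˢ T₂)ᶜ = 0 := hac <| by
    rw [Set.compl_prod_eq_union]
    refine measure_union_null ?_ ?_ <;> simp [Measure.prod_prod, hB₁T₁, hB₂T₂]
  have hfst := map_fst_singleton_eq_tsum hT₂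
    (measure_mono_null (Set.compl_subset_compl.2 fun s (hs : s ∈ T₁ ×ˢ T₂) => hs.2) hAT)
  have hsnd := map_snd_singleton_eq_tsum hT₁
    (measure_mono_null (Set.compl_subset_compl.2 fun s (hs : s ∈ T₁ ×ˢ T₂) => hs.1) hAT)
  have hA1 : HasSum (fun s : T₁ × T₂ => (A {((s.1 : β), (s.2 : γ))}).toReal) 1 := by
    refine hasSum_toReal_of_tsum_eq ?_ ENNReal.one_ne_top
    rw [← tsum_measure_singleton_eq_one (hT₁.prod hT₂) hAT, ← (Equiv.Set.prod T₁ T₂).symm.tsum_eq]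
    rfl
  have key := tsum_ofReal_hrelTerm_marginals_le (q₁ := fun a : T₁ => (B₁ {(a : β)}).toReal)
    (q₂ := fun b : T₂ => (B₂ {(b : γ)}).toReal)
    (fun a => ENNReal.toReal_pos a.2 (measure_ne_top _ _))
    (fun b => ENNReal.toReal_pos b.2 (measure_ne_top _ _))
    (by simpa using (hasSum_toReal_of_tsum_eq (tsum_measure_singleton_eq_one hT₂ hB₂T₂)
      ENNReal.one_ne_top))
    (fun s => ENNReal.toReal_nonneg) hA1
  have hac₁ : A.map Prod.fst ≪ B₁ := by simpa using hac.map measurable_fst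
  have hac₂ : A.map Prod.snd ≪ B₂ := by simpa using hac.map measurable_snd
  rw [Hrel_eq_tsum_subtype hac₁ (S := T₁) (fun a ha => by simpa [T₁] using ha),
    Hrel_eq_tsum_subtype hac₂ (S := T₂) (fun b hb => by simpa [T₂] using hb),
    Hrel_prod_eq_tsum hac]
  convert key using 4
  · rw [hfst, ENNReal.tsum_toReal_eq fun _ => measure_ne_top _ _]
  · rw [hsnd, ENNReal.tsum_toReal_eq fun _ => measure_ne_top _ _]

end RelativeEntropy

section Coupling

def StochasticLE (ψ ψ' : PMF ℕ) : Prop :=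
  ∀ a : ℕ, (∑' b, if a ≤ b then ψ b else 0) ≤ ∑' b, if a ≤ b then ψ' b else 0

variable (ψ : PMF ℕ)

noncomputable def massBelow (a : ℕ) : ℝ≥0∞ := ∑ b ∈ Finset.range a, ψ b

noncomputable def quantileIco (a : ℕ) : Set ℝ :=
  Set.Ico (massBelow ψ a).toReal (massBelow ψ (a + 1)).toReal

lemma massBelow_add_tsum_ite (a : ℕ) : massBelow ψ a + ∑' b, (if a ≤ b then ψ b else 0) = 1 := by
  refine (?_ : _ = ∑ b ∈ Finset.range a, ψ b + ∑' b : ↥((Finset.range a : Set ℕ)ᶜ), ψ b).trans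
    ((ENNReal.sum_add_tsum_compl _ _).trans ψ.tsum_coe)
  rw [tsum_subtype, massBelow]
  congr 2 with b
  simp [Set.indicator]

lemma massBelow_le_one (a : ℕ) : massBelow ψ a ≤ 1 :=
  ψ.tsum_coe ▸ ENNReal.sum_le_tsum _

lemma massBelow_ne_top (a : ℕ) : massBelow ψ a ≠ ⊤ :=
  ne_top_of_le_ne_top ENNReal.one_ne_top (massBelow_le_one ψ a)

lemma toReal_massBelow_mono {a b : ℕ} (h : a ≤ b) :
    (massBelow ψ a).toReal ≤ (massBelow ψ b).toReal :=
  ENNReal.toReal_mono (massBelow_ne_top ψ b)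
    (Finset.sum_le_sum_of_subset (Finset.range_subset_range.2 h))

lemma toReal_massBelow_le_one (a : ℕ) : (massBelow ψ a).toReal ≤ 1 := by
  simpa using ENNReal.toReal_mono ENNReal.one_ne_top (massBelow_le_one ψ a)

lemma tendsto_toReal_massBelow : Tendsto (fun a => (massBelow ψ a).toReal) atTop (nhds 1) :=
  (ENNReal.tendsto_toReal ENNReal.one_ne_top).comp (ψ.tsum_coe ▸ ENNReal.tendsto_nat_tsum ψ)

lemma volume_quantileIco (a : ℕ) : volume (quantileIco ψ a) = ψ a := by
  have hsucc : massBelow ψ (a + 1) = massBelow ψ a + ψ a := Finset.sum_range_succ _ _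
  rw [quantileIco, Real.volume_Ico, ← ENNReal.toReal_sub_of_le (hsucc ▸ le_self_add)
    (massBelow_ne_top ψ _), hsucc, ENNReal.add_sub_cancel_left (massBelow_ne_top ψ a),
    ENNReal.ofReal_toReal (ψ.apply_ne_top a)]

lemma pairwise_disjoint_quantileIco : Pairwise (Function.onFun Disjoint (quantileIco ψ)) := by
  intro a b hab
  wlog h : a < b generalizing a b
  · exact (this hab.symm (by omega)).symm
  refine Set.disjoint_left.2 fun x hx hx' => ?_
  linarith [hx.2, hx'.1, toReal_massBelow_mono ψ (show a + 1 ≤ b by omega)]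

lemma iUnion_quantileIco : ⋃ a, quantileIco ψ a = Set.Ico 0 1 := by
  refine Set.Subset.antisymm (Set.iUnion_subset fun a x hx => ⟨?_, ?_⟩) fun x hx => ?_
  · exact ENNReal.toReal_nonneg.trans hx.1
  · exact hx.2.trans_le (toReal_massBelow_le_one ψ _)
  · classical
    have hex : ∃ n, x < (massBelow ψ n).toReal :=
      ((tendsto_toReal_massBelow ψ).eventually (eventually_gt_nhds hx.2)).exists
    obtain ⟨b, hb⟩ : ∃ b, Nat.find hex = b + 1 :=
      Nat.exists_eq_succ_of_ne_zero fun h => by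
        have := Nat.find_spec hex
        rw [h] at this
        simp [massBelow] at this
        linarith [hx.1]
    refine Set.mem_iUnion.2 ⟨b, not_lt.1 (Nat.find_min hex (by omega)), hb ▸ Nat.find_spec hex⟩

lemma tsum_volume_inter_quantileIco {s : Set ℝ} (hs : MeasurableSet s)
    (hs1 : s ⊆ Set.Ico 0 1) : ∑' a, volume (s ∩ quantileIco ψ a) = volume s := by
  rw [← measure_iUnion (fun a b hab => (pairwise_disjoint_quantileIco ψ hab).mono
      Set.inter_subset_right Set.inter_subset_right) fun a => hs.inter measurableSet_Ico,
    ← Set.inter_iUnion, iUnion_quantileIco, Set.inter_eq_left.2 hs1]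

lemma quantileIco_subset_Ico (a : ℕ) : quantileIco ψ a ⊆ Set.Ico 0 1 := by
  rw [← iUnion_quantileIco ψ]
  exact Set.subset_iUnion _ a

variable {ψ} {ψ' : PMF ℕ}

lemma massBelow_le_of_stochasticLE (h : StochasticLE ψ ψ') (a : ℕ) :
    massBelow ψ' a ≤ massBelow ψ a := by
  have htail : ∀ φ : PMF ℕ, massBelow φ a = 1 - ∑' b, (if a ≤ b then φ b else 0) := fun φ =>
    ENNReal.eq_sub_of_add_eq (ne_top_of_le_ne_top ENNReal.one_ne_top
      (le_add_self.trans_eq (massBelow_add_tsum_ite φ a))) (massBelow_add_tsum_ite φ a)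
  rw [htail, htail]
  exact tsub_le_tsub_left (h a) 1

/-- The quantile coupling: both laws are read off one uniform variable on `[0, 1)`. -/
theorem exists_monotone_coupling (h : StochasticLE ψ ψ') :
    ∃ π : ℕ → ℕ → ℝ≥0∞, (∀ a, ∑' b, π a b = ψ a) ∧ (∀ b, ∑' a, π a b = ψ' b) ∧
      ∀ a b, b < a → π a b = 0 := by
  refine ⟨fun a b => volume (quantileIco ψ a ∩ quantileIco ψ' b), fun a => ?_, fun b => ?_,
    fun a b hba => ?_⟩
  · rw [tsum_volume_inter_quantileIco ψ' (s := quantileIco ψ a) measurableSet_Ico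
      (quantileIco_subset_Ico ψ a), volume_quantileIco]
  · simp_rw [Set.inter_comm (quantileIco ψ _)]
    rw [tsum_volume_inter_quantileIco ψ (s := quantileIco ψ' b) measurableSet_Ico
      (quantileIco_subset_Ico ψ' b), volume_quantileIco]
  · refine measure_mono_null (fun x hx => ?_) measure_empty
    have hle := ENNReal.toReal_mono (massBelow_ne_top ψ _) (massBelow_le_of_stochasticLE h (b + 1))
    linarith [hx.1.1, hx.2.2, toReal_massBelow_mono ψ (show b + 1 ≤ a by omega)]

end Coupling

section Configurations

lemma measurable_coord (k : ℕ+) (x : Site d) : Measurable fun ω : Config d => ω k x :=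
  (measurable_pi_apply x).comp (measurable_pi_apply k)

lemma measurable_restrict (Λ : Finset (Site d)) : Measurable (restrict Λ) := by
  refine measurable_pi_lambda _ fun k => measurable_pi_lambda _ fun x => ?_
  by_cases hx : x ∈ Λ
  · simpa [restrict, hx] using measurable_coord k x
  · simp [restrict, hx]

lemma measurable_shift (z : Site d) : Measurable (shift z) :=
  measurable_pi_lambda _ fun k => measurable_pi_lambda _ fun x => measurable_coord k (x + z)

noncomputable def shiftEquiv (z : Site d) : Config d ≃ᵐ Config d where
  toFun := shift z
  invFun := shift (-z)
  left_inv ω := by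
    funext k x
    simp [shift]
  right_inv ω := by
    funext k x
    simp [shift]
  measurable_toFun := measurable_shift z
  measurable_invFun := measurable_shift (-z)

lemma restrict_comp_restrict {Λ Λ' : Finset (Site d)} (h : Λ ⊆ Λ') :
    restrict Λ ∘ restrict Λ' = restrict (d := d) Λ := by
  ext ω k x
  by_cases hx : x ∈ Λ
  · simp [restrict, hx, h hx]
  · simp [restrict, hx]

lemma restrict_comp_shift (Λ : Finset (Site d)) (z : Site d) :
    restrict Λ ∘ shift z = shift z ∘ restrict (Λ.image (· + z)) := by
  ext ω k x
  simp [restrict, shift]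

end Configurations

section ReferenceMeasure

variable (M : Model d)

instance isProbabilityMeasure_ref : IsProbabilityMeasure M.ref := M.href.1

lemma map_uncurry_ref : M.ref.map (fun ω (p : ℕ+ × Site d) => ω p.1 p.2)
    = Measure.infinitePi fun p : ℕ+ × Site d => poissonMeasure (M.q p.1) := by
  simpa only [M.href.2.2] using
    M.href.2.1.map_fun_eq_infinitePi_map fun p : ℕ+ × Site d => measurable_coord p.1 p.2

/-- A shift only permutes the coordinates of the product measure `map_uncurry_ref`. -/
lemma map_shift_ref (z : Site d) : M.ref.map (shift z) = M.ref := by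
  let U := (MeasurableEquiv.curry (ℕ+) (Site d) ℕ).symm
  have hτ : Function.Injective fun p : ℕ+ × Site d => (p.1, p.2 + z) := fun p p' h => by
    simp only [Prod.mk.injEq, add_left_inj] at h
    exact Prod.ext h.1 h.2
  apply U.map_measurableEquiv_injective
  rw [Measure.map_map U.measurable (measurable_shift z)]
  change M.ref.map ((fun η (p : ℕ+ × Site d) => η (p.1, p.2 + z)) ∘ U) = M.ref.map U
  rw [← Measure.map_map (by fun_prop) U.measurable]
  change (M.ref.map fun ω (p : ℕ+ × Site d) => ω p.1 p.2).map _
    = M.ref.map fun ω (p : ℕ+ × Site d) => ω p.1 p.2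
  rw [map_uncurry_ref, Measure.map_infinitePi_infinitePi_of_inj hτ]

lemma comap_restrict_le (Λ : Finset (Site d)) :
    MeasurableSpace.comap (restrict Λ) inferInstance
      ≤ ⨆ p ∈ {p : ℕ+ × Site d | p.2 ∈ Λ},
          MeasurableSpace.comap (fun ω : Config d => ω p.1 p.2) inferInstance := by
  refine Measurable.comap_le (@measurable_pi_lambda _ _ _ (_) _ _ fun k =>
    @measurable_pi_lambda _ _ _ (_) _ _ fun x => ?_)
  by_cases hx : x ∈ Λ
  · simp only [restrict, hx, if_true]
    exact (comap_measurable _).mono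
      (le_iSup₂ (f := fun (p : ℕ+ × Site d) (_ : p ∈ {p : ℕ+ × Site d | p.2 ∈ Λ}) =>
        MeasurableSpace.comap (fun ω : Config d => ω p.1 p.2) inferInstance) (k, x) hx) le_rfl
  · simp only [restrict, hx, if_false]
    exact measurable_const

lemma indepFun_restrict {Λ Λ' : Finset (Site d)} (h : Disjoint Λ Λ') :
    IndepFun (restrict Λ) (restrict Λ') M.ref := by
  have hwin := indep_iSup_of_disjoint (fun p => (measurable_coord p.1 p.2).comap_le)
    ((iIndepFun_iff_iIndep _ _ _).1 M.href.2.1) (S := {p : ℕ+ × Site d | p.2 ∈ Λ})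
    (T := {p | p.2 ∈ Λ'}) (Set.disjoint_left.2 fun p hp hp' => Finset.disjoint_left.1 h hp hp')
  rw [IndepFun_iff_Indep]
  exact indep_of_indep_of_le_right (indep_of_indep_of_le_left hwin (comap_restrict_le Λ))
    (comap_restrict_le Λ')

lemma map_restrict_prod_ref {Λ Λ' : Finset (Site d)} (h : Disjoint Λ Λ') :
    M.ref.map (fun ω => (restrict Λ ω, restrict Λ' ω))
      = (M.ref.map (restrict Λ)).prod (M.ref.map (restrict Λ')) :=
  (indepFun_iff_map_prod_eq_prod_map_map (measurable_restrict Λ).aemeasurable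
    (measurable_restrict Λ').aemeasurable).1 (indepFun_restrict M h)

lemma poissonMeasure_compl_zero_le (r : ℝ≥0) : poissonMeasure r {0}ᶜ ≤ r := by
  rw [prob_compl_eq_one_sub (measurableSet_singleton 0), poissonMeasure_singleton,
    tsub_le_iff_right, ← ENNReal.ofReal_coe_nnreal,
    ← ENNReal.ofReal_add r.coe_nonneg (by positivity)]
  simpa using ENNReal.ofReal_le_ofReal (by linarith [Real.add_one_le_exp (-(r : ℝ))] :
    (1 : ℝ) ≤ r + Real.exp (-r))

lemma countable_setOf_finite_support :
    {ω : Config d | (Function.support (Function.uncurry ω)).Finite}.Countable :=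
  (Set.countable_range fun f : (ℕ+ × Site d) →₀ ℕ => Function.curry ⇑f).mono fun ω hω =>
    Set.mem_range.2 ⟨Finsupp.ofSupportFinite _ hω, by ext k x; simp [Finsupp.ofSupportFinite_coe]⟩

/-- Borel–Cantelli, since `∑ₖ q k < ∞`. -/
lemma map_restrict_ref_compl_finite_support (Λ : Finset (Site d)) :
    M.ref.map (restrict Λ) {ω : Config d | (Function.support (Function.uncurry ω)).Finite}ᶜ
      = 0 := by
  set s : ℕ+ × Site d → Set (Config d) := fun p => {ω | p.2 ∈ Λ ∧ ω p.1 p.2 ≠ 0}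
  have hs : ∀ p, M.ref (s p) ≤ if p.2 ∈ Λ then (M.q p.1 : ℝ≥0∞) else 0 := fun p => by
    split_ifs with hp
    · have : s p = (fun ω : Config d => ω p.1 p.2) ⁻¹' {0}ᶜ := by ext; simp [s, hp]
      rw [this, ← Measure.map_apply (measurable_coord p.1 p.2) (measurableSet_singleton 0).compl,
        M.href.2.2]
      exact poissonMeasure_compl_zero_le _
    · simp [s, hp]
  have hsum : ∑' p, M.ref (s p) ≠ ⊤ := by
    refine ne_top_of_le_ne_top ?_ (ENNReal.tsum_le_tsum hs)
    rw [ENNReal.tsum_prod']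
    simp_rw [tsum_eq_sum (s := Λ) (fun x (hx : x ∉ Λ) => if_neg hx), Finset.sum_ite_mem,
      Finset.inter_self, Finset.sum_const, nsmul_eq_mul, ENNReal.tsum_mul_left]
    exact ENNReal.mul_ne_top (by simp) (ENNReal.tsum_coe_ne_top_iff_summable.2 M.hq_sum)
  rw [Measure.map_apply (measurable_restrict Λ) countable_setOf_finite_support.measurableSet.compl]
  refine measure_mono_null (fun ω hω => ?_) (ae_iff.1 (ae_finite_setOfPred_mem hsum))
  have hsupp : {p | ω ∈ s p} = Function.support (Function.uncurry (restrict Λ ω)) := by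
    ext ⟨k, x⟩
    by_cases hx : x ∈ Λ
    · simp [s, restrict, hx]
    · simp [s, restrict, hx]
  simpa [hsupp] using hω

end ReferenceMeasure

section WindowEntropy

variable (M : Model d)

noncomputable def windowEntropy (μ : Measure (Config d)) (Λ : Finset (Site d)) : ℝ≥0∞ :=
  Hrel (μ.map (restrict Λ)) (M.ref.map (restrict Λ))

lemma restrict_union_eq_add {Λ Λ' : Finset (Site d)} (h : Disjoint Λ Λ') (ω : Config d) :
    restrict (Λ ∪ Λ') ω = restrict Λ ω + restrict Λ' ω := by
  ext k x
  by_cases hx : x ∈ Λ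
  · simp [restrict, hx, Finset.disjoint_left.1 h hx]
  · by_cases hx' : x ∈ Λ' <;> simp [restrict, hx, hx']

/-- Under `M.ref` the marginals on disjoint windows are independent, so the reference law on
`Λ ∪ Λ'` is a product and `Hrel_map_fst_add_Hrel_map_snd_le` applies. -/
lemma windowEntropy_add_le_union (μ : Measure (Config d)) [IsProbabilityMeasure μ]
    {Λ Λ' : Finset (Site d)} (h : Disjoint Λ Λ') :
    windowEntropy M μ Λ + windowEntropy M μ Λ' ≤ windowEntropy M μ (Λ ∪ Λ') := by
  set G : Config d → Config d × Config d := fun ω => (restrict Λ ω, restrict Λ' ω)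
  have hG : Measurable G := (measurable_restrict Λ).prodMk (measurable_restrict Λ')
  have hpair : Hrel (μ.map G) (M.ref.map G) = windowEntropy M μ (Λ ∪ Λ') :=
    Hrel_map_eq_of_factor (v := fun p => p.1 + p.2) (measurable_restrict _) hG hG
      (measurable_fst.add measurable_snd)
      (funext fun ω => Prod.ext
        (congrFun (restrict_comp_restrict Finset.subset_union_left) ω).symm
        (congrFun (restrict_comp_restrict Finset.subset_union_right) ω).symm)
      (funext (restrict_union_eq_add h))
  have hfst : (μ.map G).map Prod.fst = μ.map (restrict Λ) := by
    rw [Measure.map_map measurable_fst hG]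
    rfl
  have hsnd : (μ.map G).map Prod.snd = μ.map (restrict Λ') := by
    rw [Measure.map_map measurable_snd hG]
    rfl
  have := Measure.isProbabilityMeasure_map (μ := μ) hG.aemeasurable
  have := Measure.isProbabilityMeasure_map (μ := M.ref) (measurable_restrict Λ).aemeasurable
  have := Measure.isProbabilityMeasure_map (μ := M.ref) (measurable_restrict Λ').aemeasurable
  rw [windowEntropy, windowEntropy, ← hpair, map_restrict_prod_ref M h, ← hfst, ← hsnd]
  exact Hrel_map_fst_add_Hrel_map_snd_le countable_setOf_finite_support
    countable_setOf_finite_support (map_restrict_ref_compl_finite_support M Λ)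
    (map_restrict_ref_compl_finite_support M Λ')

lemma windowEntropy_mono (μ : Measure (Config d)) [IsProbabilityMeasure μ]
    {Λ Λ' : Finset (Site d)} (h : Λ ⊆ Λ') : windowEntropy M μ Λ ≤ windowEntropy M μ Λ' := by
  have := windowEntropy_add_le_union M μ (Finset.disjoint_sdiff (s := Λ) (t := Λ'))
  rw [Finset.union_sdiff_of_subset h] at this
  exact le_self_add.trans this

lemma windowEntropy_image_add (μ : Measure (Config d)) (hμ : ∀ z, μ.map (shift z) = μ)
    (Λ : Finset (Site d)) (z : Site d) :
    windowEntropy M μ (Λ.image (· + z)) = windowEntropy M μ Λ := by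
  have hmap : ∀ ξ : Measure (Config d), ξ.map (shift z) = ξ →
      ξ.map (restrict Λ) = (ξ.map (restrict (Λ.image (· + z)))).map (shiftEquiv z) := by
    intro ξ hξ
    change _ = Measure.map (shift z) _
    rw [Measure.map_map (measurable_shift z) (measurable_restrict _), ← restrict_comp_shift,
      ← Measure.map_map (measurable_restrict Λ) (measurable_shift z), hξ]
  rw [windowEntropy, windowEntropy, hmap μ (hμ z), hmap M.ref (map_shift_ref M z),
    Hrel_map_equiv]

end WindowEntropy

section Tiling

lemma card_box (n : ℕ) : (box d n).card = (2 * n + 1) ^ d := by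
  simp only [box, Fintype.card_piFinset, Int.card_Icc, Finset.prod_const, Finset.card_univ,
    Fintype.card_fin]
  congr 1
  omega

noncomputable def tile (n : ℕ) (z : Site d) : Finset (Site d) :=
  (box d n).image (· + (2 * n + 1 : ℤ) • z)

lemma disjoint_tile (n : ℕ) {z z' : Site d} (h : z ≠ z') : Disjoint (tile n z) (tile n z') := by
  refine Finset.disjoint_left.2 fun x hx hx' => h (funext fun i => ?_)
  obtain ⟨y, hy, rfl⟩ := Finset.mem_image.1 hx
  obtain ⟨y', hy', hyy'⟩ := Finset.mem_image.1 hx'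
  have hyi := Finset.mem_Icc.1 (Fintype.mem_piFinset.1 hy i)
  have hyi' := Finset.mem_Icc.1 (Fintype.mem_piFinset.1 hy' i)
  have hi : y' i - y i = (2 * n + 1 : ℤ) * (z i - z' i) := by
    have := congrFun hyy' i
    simp only [Pi.add_apply, Pi.smul_apply, smul_eq_mul] at this
    linarith
  have h0 : y' i - y i = 0 := Int.eq_zero_of_abs_lt_dvd ⟨_, hi⟩ (by rw [abs_lt]; omega)
  rw [h0] at hi
  rcases mul_eq_zero.1 hi.symm with h | h <;> omega

lemma biUnion_tile_subset_box (n t : ℕ) :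
    (box d t).biUnion (tile n) ⊆ box d (n + (2 * n + 1) * t) := by
  intro x hx
  obtain ⟨z, hz, hx⟩ := Finset.mem_biUnion.1 hx
  obtain ⟨y, hy, rfl⟩ := Finset.mem_image.1 hx
  refine Fintype.mem_piFinset.2 fun i => Finset.mem_Icc.2 ?_
  have hyi := Finset.mem_Icc.1 (Fintype.mem_piFinset.1 hy i)
  have hzi := Finset.mem_Icc.1 (Fintype.mem_piFinset.1 hz i)
  simp only [Pi.add_apply, Pi.smul_apply, smul_eq_mul]
  push_cast
  constructor <;> nlinarith

end Tiling

section EntropyDensity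

variable (M : Model d)

lemma card_mul_windowEntropy_box_le (μ : Measure (Config d)) [IsProbabilityMeasure μ]
    (hμ : ∀ z, μ.map (shift z) = μ) (n t : ℕ) :
    ((box d t).card : ℝ≥0∞) * windowEntropy M μ (box d n)
      ≤ windowEntropy M μ (box d (n + (2 * n + 1) * t)) := by
  classical
  have htiles : ∀ Z : Finset (Site d),
      (Z.card : ℝ≥0∞) * windowEntropy M μ (box d n) ≤ windowEntropy M μ (Z.biUnion (tile n)) := by
    intro Z
    induction Z using Finset.induction_on with
    | empty => simp
    | @insert z Z hz ih =>
      have hdisj : Disjoint (tile n z) (Z.biUnion (tile n)) :=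
        (Finset.disjoint_biUnion_right _ _ _).2 fun z' hz' => disjoint_tile n fun h => hz (h ▸ hz')
      rw [Finset.biUnion_insert, Finset.card_insert_of_notMem hz, Nat.cast_succ, add_mul, one_mul,
        add_comm]
      calc _ ≤ windowEntropy M μ (tile n z) + windowEntropy M μ (Z.biUnion (tile n)) := by
            rw [tile, windowEntropy_image_add M μ hμ]
            gcongr
        _ ≤ _ := windowEntropy_add_le_union M μ hdisj
  exact (htiles (box d t)).trans (windowEntropy_mono M μ (biUnion_tile_subset_box n t))

lemma windowEntropy_div_card_le_entDens (μ : Measure (Config d)) [IsProbabilityMeasure μ]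
    (hμ : ∀ z, μ.map (shift z) = μ) (n : ℕ) :
    windowEntropy M μ (box d n) / (box d n).card ≤ entDens M.ref μ := by
  have hcard : ∀ t, ((box d (n + (2 * n + 1) * t)).card : ℝ≥0∞)
      = (box d t).card * (box d n).card := fun t => by
    rw [card_box, card_box, card_box, ← Nat.cast_mul, ← mul_pow]
    congr 2
    ring
  have hpos : ∀ m, ((box d m).card : ℝ≥0∞) ≠ 0 := fun m => by simp [card_box]
  have hmono : ∀ t, windowEntropy M μ (box d n) / (box d n).card
      ≤ windowEntropy M μ (box d (n + (2 * n + 1) * t)) / (box d (n + (2 * n + 1) * t)).card :=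
    fun t => by
      rw [hcard, ← ENNReal.mul_div_mul_left _ _ (hpos t) (ENNReal.natCast_ne_top _)]
      gcongr
      exact card_mul_windowEntropy_box_le M μ hμ n t
  have hN : Tendsto (fun t : ℕ => n + (2 * n + 1) * t) atTop atTop :=
    tendsto_atTop_mono (fun t => show t ≤ n + (2 * n + 1) * t by nlinarith) tendsto_id
  exact le_limsup_of_frequently_le (hN.frequently (Frequently.of_forall hmono))
    (by isBoundedDefault)

lemma entDens_sum_le {ι : Type*} {W : ι → ℝ≥0∞} (hW : ∑' i, W i = 1)
    {P : ι → Measure (Config d)} [∀ i, IsProbabilityMeasure (P i)]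
    (hP : ∀ i z, (P i).map (shift z) = P i) :
    entDens M.ref (Measure.sum fun i => W i • P i) ≤ ∑' i, W i * entDens M.ref (P i) := by
  refine limsup_le_of_le (by isBoundedDefault) (Eventually.of_forall fun n => ?_)
  have := Measure.isProbabilityMeasure_map (μ := M.ref) (measurable_restrict (box d n)).aemeasurable
  have := fun i =>
    Measure.isProbabilityMeasure_map (μ := P i) (measurable_restrict (box d n)).aemeasurable
  calc _ ≤ (∑' i, W i * windowEntropy M (P i) (box d n)) / (box d n).card := by
        rw [Measure.map_sum (measurable_restrict _).aemeasurable]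
        simp_rw [Measure.map_smul]
        gcongr
        exact Hrel_sum_le hW
    _ = ∑' i, W i * (windowEntropy M (P i) (box d n) / (box d n).card) := by
        simp only [div_eq_mul_inv, ← ENNReal.tsum_mul_right, mul_assoc]
    _ ≤ _ := by
        gcongr with i
        exact windowEntropy_div_card_le_entDens M (P i) (hP i) n

end EntropyDensity

section Variational

variable (M : Model d)

noncomputable def objectiveTerm (a : ℕ) (Q : Measure (Config d)) : ℝ≥0∞ :=
  entDens M.ref Q + ∫⁻ ω, PhiZero M ω ∂Q + 2 * vbar M * a * ∫⁻ ω, Nell ω ∂Q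
    + vbar M * (a : ℝ≥0∞) ^ 2

lemma objectiveTerm_mono {a b : ℕ} (h : a ≤ b) (Q : Measure (Config d)) :
    objectiveTerm M a Q ≤ objectiveTerm M b Q := by
  unfold objectiveTerm
  gcongr

lemma lintegral_sum_smul {ι : Type*} (W : ι → ℝ≥0∞) (P : ι → Measure (Config d))
    (f : Config d → ℝ≥0∞) :
    ∫⁻ ω, f ω ∂(Measure.sum fun i => W i • P i) = ∑' i, W i * ∫⁻ ω, f ω ∂(P i) := by
  simp [lintegral_sum_measure, lintegral_smul_measure]

lemma isShiftInvariantProb_sum {ι : Type*} {W : ι → ℝ≥0∞} (hW : ∑' i, W i = 1)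
    {P : ι → Measure (Config d)} (hP : ∀ i, IsShiftInvariantProb (P i)) :
    IsShiftInvariantProb (Measure.sum fun i => W i • P i) := by
  have := fun i => (hP i).1
  refine ⟨⟨by simp [hW]⟩, fun z => ?_⟩
  rw [Measure.map_sum (measurable_shift z).aemeasurable]
  simp_rw [Measure.map_smul, (hP _).2 z]

lemma objectiveTerm_sum_le {ι : Type*} {W : ι → ℝ≥0∞} (hW : ∑' i, W i = 1)
    {P : ι → Measure (Config d)} (hP : ∀ i, IsShiftInvariantProb (P i)) (a : ℕ) :
    objectiveTerm M a (Measure.sum fun i => W i • P i) ≤ ∑' i, W i * objectiveTerm M a (P i) := by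
  have := fun i => (hP i).1
  calc _ ≤ ∑' i, W i * entDens M.ref (P i) + ∑' i, W i * ∫⁻ ω, PhiZero M ω ∂(P i)
        + 2 * vbar M * a * ∑' i, W i * ∫⁻ ω, Nell ω ∂(P i) + (∑' i, W i) * (vbar M * a ^ 2) := by
        rw [objectiveTerm, lintegral_sum_smul, lintegral_sum_smul, hW, one_mul]
        gcongr
        exact entDens_sum_le M hW fun i => (hP i).2
    _ = _ := by
        rw [← ENNReal.tsum_mul_left, ← ENNReal.tsum_mul_right, ← ENNReal.tsum_add,
          ← ENNReal.tsum_add, ← ENNReal.tsum_add]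
        congr 1 with i
        rw [objectiveTerm]
        ring

lemma phiObjective_eq_tsum (ψ : PMF ℕ) (P : ℕ → Measure (Config d)) :
    phiObjective M ψ P = ∑' a, ψ a * objectiveTerm M a (P a) := rfl

noncomputable def mixtureFamily (ψ : PMF ℕ) (π : ℕ → ℕ → ℝ≥0∞) (P' : ℕ → Measure (Config d))
    (a : ℕ) : Measure (Config d) :=
  if ψ a = 0 then P' a else Measure.sum fun b => (π a b / ψ a) • P' b

section MixtureFamily

variable {ψ : PMF ℕ} {π : ℕ → ℕ → ℝ≥0∞} (hrow : ∀ a, ∑' b, π a b = ψ a)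
  (P' : ℕ → Measure (Config d))
include hrow

lemma tsum_div_eq_one_of_ne_zero {a : ℕ} (ha : ψ a ≠ 0) : ∑' b, π a b / ψ a = 1 := by
  simp_rw [div_eq_mul_inv]
  rw [ENNReal.tsum_mul_right, hrow, ENNReal.mul_inv_cancel ha (ψ.apply_ne_top a)]

lemma eq_zero_of_marginal_eq_zero {a : ℕ} (ha : ψ a = 0) (b : ℕ) : π a b = 0 :=
  nonpos_iff_eq_zero.1 (ha ▸ hrow a ▸ ENNReal.le_tsum b)

lemma mul_lintegral_mixtureFamily (a : ℕ) (f : Config d → ℝ≥0∞) :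
    ψ a * ∫⁻ ω, f ω ∂(mixtureFamily ψ π P' a) = ∑' b, π a b * ∫⁻ ω, f ω ∂(P' b) := by
  by_cases ha : ψ a = 0
  · simp [ha, eq_zero_of_marginal_eq_zero hrow ha]
  · simp only [mixtureFamily, if_neg ha, lintegral_sum_smul, ← ENNReal.tsum_mul_left,
      ← mul_assoc, ENNReal.mul_div_cancel ha (ψ.apply_ne_top a)]

lemma phiAdmissible_mixtureFamily {m : ℕ+ → ℝ≥0} {ψ' : PMF ℕ}
    (hcol : ∀ b, ∑' a, π a b = ψ' b) (hP' : phiAdmissible M m ψ' P') :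
    phiAdmissible M m ψ (mixtureFamily ψ π P') := by
  refine ⟨fun a => ?_, fun k => ?_⟩
  · by_cases ha : ψ a = 0
    · simpa [mixtureFamily, ha] using hP'.1 a
    · simpa [mixtureFamily, ha] using
        isShiftInvariantProb_sum (tsum_div_eq_one_of_ne_zero hrow ha) hP'.1
  · rw [← hP'.2 k]
    simp_rw [mul_lintegral_mixtureFamily hrow]
    rw [ENNReal.tsum_comm]
    simp_rw [ENNReal.tsum_mul_right, hcol]

lemma mul_objectiveTerm_mixtureFamily_le (hsupp : ∀ a b, b < a → π a b = 0)
    (hP' : ∀ b, IsShiftInvariantProb (P' b)) (a : ℕ) :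
    ψ a * objectiveTerm M a (mixtureFamily ψ π P' a)
      ≤ ∑' b, π a b * objectiveTerm M b (P' b) := by
  by_cases ha : ψ a = 0
  · simp [ha]
  calc _ ≤ ψ a * ∑' b, π a b / ψ a * objectiveTerm M a (P' b) := by
        simp only [mixtureFamily, if_neg ha]
        gcongr
        exact objectiveTerm_sum_le M (tsum_div_eq_one_of_ne_zero hrow ha) hP' a
    _ = ∑' b, π a b * objectiveTerm M a (P' b) := by
        rw [← ENNReal.tsum_mul_left]
        simp_rw [← mul_assoc, ENNReal.mul_div_cancel ha (ψ.apply_ne_top a)]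
    _ ≤ _ := ENNReal.tsum_le_tsum fun b => by
        rcases lt_or_ge b a with hba | hab
        · simp [hsupp a b hba]
        · gcongr
          exact objectiveTerm_mono M hab _

end MixtureFamily

theorem phi_mono (m : ℕ+ → ℝ≥0) {ψ ψ' : PMF ℕ} (h : StochasticLE ψ ψ') :
    phi M m ψ ≤ phi M m ψ' := by
  refine le_sInf fun r ⟨P', hP', hr⟩ => hr ▸ ?_
  obtain ⟨π, hrow, hcol, hsupp⟩ := exists_monotone_coupling h
  refine sInf_le_of_le ⟨_, phiAdmissible_mixtureFamily M hrow P' hcol hP', rfl⟩ ?_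
  rw [phiObjective_eq_tsum, phiObjective_eq_tsum]
  calc _ ≤ ∑' a, ∑' b, π a b * objectiveTerm M b (P' b) :=
        ENNReal.tsum_le_tsum (mul_objectiveTerm_mixtureFamily_le M hrow P' hsupp hP'.1)
    _ = _ := by
        rw [ENNReal.tsum_comm]
        simp_rw [ENNReal.tsum_mul_right, hcol]

end Variational

section Chi

noncomputable def shrinkToZero (ψ' : PMF ℕ) {θ : ℝ≥0∞} (hθ : θ ≤ 1) : PMF ℕ :=
  ⟨fun a => (if a = 0 then 1 - θ else 0) + θ * ψ' a, ENNReal.summable.hasSum_iff.2 <| by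
    rw [ENNReal.tsum_add, tsum_ite_eq, ENNReal.tsum_mul_left, ψ'.tsum_coe, mul_one,
      tsub_add_cancel_of_le hθ]⟩

variable (ψ' : PMF ℕ) {θ : ℝ≥0∞} (hθ : θ ≤ 1)

lemma shrinkToZero_apply (a : ℕ) :
    shrinkToZero ψ' hθ a = (if a = 0 then 1 - θ else 0) + θ * ψ' a := rfl

lemma stochasticLE_shrinkToZero : StochasticLE (shrinkToZero ψ' hθ) ψ' := by
  intro a
  rcases Nat.eq_zero_or_pos a with rfl | ha
  · simp [PMF.tsum_coe]
  · calc _ = ∑' b, θ * (if a ≤ b then ψ' b else 0) := tsum_congr fun b => by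
          by_cases hab : a ≤ b
          · simp [shrinkToZero_apply, hab, show b ≠ 0 by omega]
          · simp [hab]
      _ ≤ _ := by
          rw [ENNReal.tsum_mul_left]
          exact mul_le_of_le_one_left' hθ

lemma tsum_mul_shrinkToZero :
    ∑' a : ℕ, (a : ℝ≥0∞) * shrinkToZero ψ' hθ a = θ * ∑' a : ℕ, (a : ℝ≥0∞) * ψ' a := by
  rw [← ENNReal.tsum_mul_left]
  congr 1 with a
  rcases Nat.eq_zero_or_pos a with rfl | ha
  · simp
  · simp [shrinkToZero_apply, ha.ne']
    ring

variable (M : Model d)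

theorem chi_mono (ρmi : ℝ≥0∞) {ρma ρma' : ℝ≥0∞} (h : ρma ≤ ρma') (h' : ρma' ≠ ⊤) :
    chi M ρmi ρma ≤ chi M ρmi ρma' := by
  refine le_sInf fun r ⟨m, ψ', hmi, hma', hr⟩ => hr ▸ ?_
  have hθ : ρma / ρma' ≤ 1 := ENNReal.div_le_of_le_mul (by rwa [one_mul])
  refine sInf_le_of_le ⟨m, shrinkToZero ψ' hθ, hmi, ?_, rfl⟩
    (phi_mono M m (stochasticLE_shrinkToZero ψ' hθ))
  rw [tsum_mul_shrinkToZero, hma']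
  rcases eq_or_ne ρma' 0 with h0 | h0
  · simp [h0, nonpos_iff_eq_zero.1 (h0 ▸ h)]
  · exact ENNReal.div_mul_cancel h0 h'

end Chi

theorem phi_mono_stochastic_general {d : ℕ} (M : Model d) :
    (∀ (m : ℕ+ → ℝ≥0) (ψ ψ' : PMF ℕ),
      (∀ a : ℕ, (∑' b : ℕ, if a ≤ b then ψ b else 0) ≤ ∑' b : ℕ, if a ≤ b then ψ' b else 0) →
      phi M m ψ ≤ phi M m ψ') ∧
    (∀ ρmi ρma ρma' : ℝ, 0 ≤ ρmi → 0 ≤ ρma → ρma ≤ ρma' →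
      chi M (ENNReal.ofReal ρmi) (ENNReal.ofReal ρma)
        ≤ chi M (ENNReal.ofReal ρmi) (ENNReal.ofReal ρma')) :=
  ⟨fun m _ _ h => phi_mono M m h, fun _ _ _ _ _ h =>
    chi_mono M _ (ENNReal.ofReal_le_ofReal h) ENNReal.ofReal_ne_top⟩

/-- Lemma: `ψ ↦ φ(m,ψ)` is non-decreasing for the stochastic ordering;
consequently `ρ_ma ↦ χ(ρ_mi,ρ_ma)` is non-decreasing. -/
theorem phi_mono_stochastic {d : ℕ} (hd : 0 < d) (M : Model d) :
    (∀ (m : ℕ+ → ℝ≥0) (ψ ψ' : PMF ℕ),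
      (∀ a : ℕ, (∑' b : ℕ, if a ≤ b then ψ b else 0) ≤ ∑' b : ℕ, if a ≤ b then ψ' b else 0) →
      phi M m ψ ≤ phi M m ψ') ∧
    (∀ ρmi ρma ρma' : ℝ, 0 ≤ ρmi → 0 ≤ ρma → ρma ≤ ρma' →
      chi M (ENNReal.ofReal ρmi) (ENNReal.ofReal ρma)
        ≤ chi M (ENNReal.ofReal ρmi) (ENNReal.ofReal ρma')) :=
  phi_mono_stochastic_general M

end BoxBose
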